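/- Let u be a C² solution of Δu + f(u) = 0 on an open set Ω ⊂ ℝ², and define P(x) = |∇u(x)|² + 2∫₀^{u(x)} f(s) ds. Then ΔP = 2 Σ_{i,j} u_{,ij}² − 2 f(u)² in Ω. -/

import Mathlib

/-!
Write `P = Σᵢ u_{,i}² + 2 F(u)` with `F' = f`. The product and chain rules for the Laplacian
give `ΔP = 2 Σ u_{,ij}² + 2 Σᵢ u_{,i} Δ(u_{,i}) + 2 f'(u) |∇u|² + 2 f(u) Δu`. Since `u` is `C³`,
partial derivatives commute, so `Δ(u_{,i}) = ∂ᵢ(Δu) = -f'(u) u_{,i}`: the two middle terms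
cancel, and `Δu = -f(u)` turns the last one into `-2 f(u)²`.
-/

noncomputable section

/-- Partial derivative of `u` in the `i`-th coordinate direction. -/
def pd {n : ℕ} (u : EuclideanSpace ℝ (Fin n) → ℝ) (i : Fin n)
    (x : EuclideanSpace ℝ (Fin n)) : ℝ :=
  fderiv ℝ u x (EuclideanSpace.single i 1)

/-- The Laplacian as the sum of second partial derivatives. -/
def lap {n : ℕ} (u : EuclideanSpace ℝ (Fin n) → ℝ) (x : EuclideanSpace ℝ (Fin n)) : ℝ :=
  ∑ i, pd (pd u i) i x

open Filter Topology

section PartialDerivatives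

variable {n : ℕ} {x : EuclideanSpace ℝ (Fin n)} {a b w : EuclideanSpace ℝ (Fin n) → ℝ}

theorem pd_congr_of_eventuallyEq (h : a =ᶠ[𝓝 x] b) (i : Fin n) : pd a i x = pd b i x := by
  rw [pd, pd, h.fderiv_eq]

theorem pd_const_mul (c : ℝ) (i : Fin n) :
    pd (fun y => c * a y) i = fun y => c * pd a i y := by
  ext y
  change fderiv ℝ (c • a) y _ = _
  rw [fderiv_const_smul_field]
  rfl

theorem pd_add (ha : DifferentiableAt ℝ a x) (hb : DifferentiableAt ℝ b x) (i : Fin n) :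
    pd (fun y => a y + b y) i x = pd a i x + pd b i x := by
  simp [pd, fderiv_fun_add ha hb]

theorem pd_sum {ι : Type*} {s : Finset ι} {a : ι → EuclideanSpace ℝ (Fin n) → ℝ}
    (ha : ∀ k ∈ s, DifferentiableAt ℝ (a k) x) (i : Fin n) :
    pd (fun y => ∑ k ∈ s, a k y) i x = ∑ k ∈ s, pd (a k) i x := by
  simp [pd, fderiv_fun_sum ha]

theorem pd_mul (ha : DifferentiableAt ℝ a x) (hb : DifferentiableAt ℝ b x) (i : Fin n) :
    pd (fun y => a y * b y) i x = pd a i x * b x + a x * pd b i x := by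
  simp only [pd, fderiv_fun_mul ha hb, add_apply, smul_apply,
    smul_eq_mul]
  ring

theorem pd_comp {g : ℝ → ℝ} {g' : ℝ} (hg : HasDerivAt g g' (w x))
    (hw : DifferentiableAt ℝ w x) (i : Fin n) : pd (fun y => g (w y)) i x = g' * pd w i x := by
  change fderiv ℝ (g ∘ w) x _ = _
  simp [pd, (hg.comp_hasFDerivAt x hw.hasFDerivAt).fderiv]

theorem ContDiffAt.contDiffAt_pd {m : ℕ} (hw : ContDiffAt ℝ (m + 1) w x) (i : Fin n) :
    ContDiffAt ℝ m (pd w i) x :=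
  show ContDiffAt ℝ m
      (ContinuousLinearMap.apply ℝ ℝ (EuclideanSpace.single i 1) ∘ fderiv ℝ w) x from
  (ContinuousLinearMap.apply ℝ ℝ (EuclideanSpace.single i 1)).contDiff.contDiffAt.comp x
    (hw.fderiv_right le_rfl)

theorem ContDiffAt.differentiableAt_pd (hw : ContDiffAt ℝ 2 w x) (i : Fin n) :
    DifferentiableAt ℝ (pd w i) x :=
  (hw.contDiffAt_pd (m := 1) i).differentiableAt (by simp)

theorem ContDiffAt.eventually_differentiableAt {k : ℕ} (hw : ContDiffAt ℝ k w x)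
    (hk : k ≠ 0) :
    ∀ᶠ y in 𝓝 x, DifferentiableAt ℝ w y :=
  (hw.eventually (by simp)).mono fun _ hy => hy.differentiableAt (by exact_mod_cast hk)

theorem pd_pd_eq_fderiv_fderiv (hw : ContDiffAt ℝ 2 w x) (i j : Fin n) :
    pd (pd w i) j x =
      fderiv ℝ (fderiv ℝ w) x (EuclideanSpace.single j 1) (EuclideanSpace.single i 1) := by
  have hd : DifferentiableAt ℝ (fderiv ℝ w) x :=
    (hw.fderiv_right (m := 1) le_rfl).differentiableAt one_ne_zero
  change fderiv ℝ (ContinuousLinearMap.apply ℝ ℝ (EuclideanSpace.single i 1) ∘ fderiv ℝ w) x _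
    = _
  rw [((ContinuousLinearMap.apply ℝ ℝ _).hasFDerivAt.comp x hd.hasFDerivAt).fderiv]
  rfl

theorem pd_pd_comm (hw : ContDiffAt ℝ 2 w x) (i j : Fin n) :
    pd (pd w i) j x = pd (pd w j) i x := by
  rw [pd_pd_eq_fderiv_fderiv hw, pd_pd_eq_fderiv_fderiv hw]
  exact (hw.isSymmSndFDerivAt (by simp) _ _).symm

end PartialDerivatives

section Laplacian

variable {n : ℕ} {x : EuclideanSpace ℝ (Fin n)} {a b w : EuclideanSpace ℝ (Fin n) → ℝ}

theorem lap_const_mul (c : ℝ) : lap (fun y => c * a y) x = c * lap a x := by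
  simp only [lap, pd_const_mul, Finset.mul_sum]

theorem lap_add (ha : ContDiffAt ℝ 2 a x) (hb : ContDiffAt ℝ 2 b x) :
    lap (fun y => a y + b y) x = lap a x + lap b x := by
  have hpd (j : Fin n) : pd (fun y => a y + b y) j =ᶠ[𝓝 x] fun y => pd a j y + pd b j y := by
    filter_upwards [ha.eventually_differentiableAt two_ne_zero,
      hb.eventually_differentiableAt two_ne_zero] with y hay hby
    exact pd_add hay hby j
  simp only [lap, ← Finset.sum_add_distrib]
  refine Finset.sum_congr rfl fun j _ => ?_
  rw [pd_congr_of_eventuallyEq (hpd j),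
    pd_add (ha.differentiableAt_pd j) (hb.differentiableAt_pd j)]

theorem lap_sum {ι : Type*} {s : Finset ι} {a : ι → EuclideanSpace ℝ (Fin n) → ℝ}
    (ha : ∀ k ∈ s, ContDiffAt ℝ 2 (a k) x) :
    lap (fun y => ∑ k ∈ s, a k y) x = ∑ k ∈ s, lap (a k) x := by
  have hpd (j : Fin n) :
      pd (fun y => ∑ k ∈ s, a k y) j =ᶠ[𝓝 x] fun y => ∑ k ∈ s, pd (a k) j y := by
    filter_upwards [s.eventually_all.2 fun k hk =>
      (ha k hk).eventually_differentiableAt two_ne_zero] with y hy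
    exact pd_sum hy j
  simp only [lap]
  rw [Finset.sum_comm]
  refine Finset.sum_congr rfl fun j _ => ?_
  rw [pd_congr_of_eventuallyEq (hpd j), pd_sum fun k hk => (ha k hk).differentiableAt_pd j]

theorem lap_mul (ha : ContDiffAt ℝ 2 a x) (hb : ContDiffAt ℝ 2 b x) :
    lap (fun y => a y * b y) x =
      lap a x * b x + 2 * ∑ j, pd a j x * pd b j x + a x * lap b x := by
  have hpd (j : Fin n) :
      pd (fun y => a y * b y) j =ᶠ[𝓝 x] fun y => pd a j y * b y + a y * pd b j y := by
    filter_upwards [ha.eventually_differentiableAt two_ne_zero,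
      hb.eventually_differentiableAt two_ne_zero] with y hay hby
    exact pd_mul hay hby j
  have hax := ha.differentiableAt (by simp)
  have hbx := hb.differentiableAt (by simp)
  have hterm (j : Fin n) : pd (pd (fun y => a y * b y) j) j x =
      pd (pd a j) j x * b x + 2 * (pd a j x * pd b j x) + a x * pd (pd b j) j x := by
    have hl : DifferentiableAt ℝ (fun y => pd a j y * b y) x := (ha.differentiableAt_pd j).mul hbx
    have hr : DifferentiableAt ℝ (fun y => a y * pd b j y) x := hax.mul (hb.differentiableAt_pd j)
    rw [pd_congr_of_eventuallyEq (hpd j), pd_add hl hr,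
      pd_mul (ha.differentiableAt_pd j) hbx, pd_mul hax (hb.differentiableAt_pd j)]
    ring
  simp only [lap, hterm, Finset.sum_add_distrib, Finset.sum_mul, Finset.mul_sum]

theorem lap_sq (ha : ContDiffAt ℝ 2 a x) :
    lap (fun y => a y ^ 2) x = 2 * ∑ j, pd a j x ^ 2 + 2 * a x * lap a x := by
  simp_rw [sq, lap_mul ha ha]
  ring

theorem lap_comp {g : ℝ → ℝ} (hg : ContDiff ℝ 2 g) (hw : ContDiffAt ℝ 2 w x) :
    lap (fun y => g (w y)) x =
      deriv (deriv g) (w x) * ∑ j, pd w j x ^ 2 + deriv g (w x) * lap w x := by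
  have hg' : ContDiff ℝ 1 (deriv g) := hg.deriv'
  have hgd (t : ℝ) : HasDerivAt g (deriv g t) t :=
    (hg.differentiable (by simp) t).hasDerivAt
  have hpd (j : Fin n) :
      pd (fun y => g (w y)) j =ᶠ[𝓝 x] fun y => deriv g (w y) * pd w j y := by
    filter_upwards [hw.eventually_differentiableAt two_ne_zero] with y hy
    exact pd_comp (hgd _) hy j
  have hwx := hw.differentiableAt (by simp)
  have hterm (j : Fin n) : pd (pd (fun y => g (w y)) j) j x =
      deriv (deriv g) (w x) * pd w j x ^ 2 + deriv g (w x) * pd (pd w j) j x := by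
    have hg'w : DifferentiableAt ℝ (fun y => deriv g (w y)) x :=
      (hg'.differentiable one_ne_zero _).comp x hwx
    rw [pd_congr_of_eventuallyEq (hpd j), pd_mul hg'w (hw.differentiableAt_pd j),
      pd_comp ((hg'.differentiable one_ne_zero _).hasDerivAt) hwx]
    ring
  simp only [lap, hterm, Finset.sum_add_distrib, Finset.mul_sum]

theorem pd_lap_comm (hw : ContDiffAt ℝ 3 w x) (i : Fin n) : pd (lap w) i x = lap (pd w i) x := by
  have hw2 : ContDiffAt ℝ 2 w x := hw.of_le (by norm_num)
  have hgrad (j : Fin n) : ContDiffAt ℝ 2 (pd w j) x := hw.contDiffAt_pd (m := 2) j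
  have hswap (j : Fin n) : pd (pd w j) i =ᶠ[𝓝 x] pd (pd w i) j := by
    filter_upwards [hw2.eventually (by simp)] with y hy
    exact pd_pd_comm hy j i
  change pd (fun y => ∑ j, pd (pd w j) j y) i x = _
  rw [pd_sum fun j _ => (hgrad j).differentiableAt_pd j]
  refine Finset.sum_congr rfl fun j _ => ?_
  rw [pd_pd_comm (hgrad j), pd_congr_of_eventuallyEq (hswap j)]

end Laplacian

theorem ContDiff.integral_right {E : Type*} [NormedAddCommGroup E] [NormedSpace ℝ E]
    [CompleteSpace E] {f : ℝ → E} {k : ℕ} (hf : ContDiff ℝ k f) (a : ℝ) :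
    ContDiff ℝ (k + 1) fun t => ∫ s in a..t, f s := by
  have hderiv : deriv (fun t => ∫ s in a..t, f s) = f :=
    funext (Continuous.deriv_integral f hf.continuous a)
  refine contDiff_succ_iff_deriv.2 ⟨fun t => ?_, by simp, by rwa [hderiv]⟩
  exact (hf.continuous.integral_hasStrictDerivAt a t).hasDerivAt.differentiableAt

/-- For a solution of `Δu + f(u) = 0` on an open set `Ω ⊆ ℝ²`, the P-function
`P = |∇u|² + 2∫₀ᵘ f` satisfies `ΔP = 2 Σ u_{,ij}² − 2 f(u)²` in `Ω`. -/
theorem stmt4 (Ω : Set (EuclideanSpace ℝ (Fin 2))) (hΩ : IsOpen Ω)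
    (f : ℝ → ℝ) (hf : ContDiff ℝ 1 f)
    (u : EuclideanSpace ℝ (Fin 2) → ℝ) (hu : ContDiffOn ℝ 3 u Ω)
    (heq : ∀ x ∈ Ω, lap u x + f (u x) = 0)
    (P : EuclideanSpace ℝ (Fin 2) → ℝ)
    (hP : P = fun x => (∑ i, (pd u i x) ^ 2) + 2 * ∫ s in (0:ℝ)..(u x), f s) :
    ∀ x ∈ Ω, lap P x = 2 * (∑ i, ∑ j, (pd (pd u i) j x) ^ 2) - 2 * (f (u x)) ^ 2 := by
  intro x hx
  subst hP
  have hu3 : ContDiffAt ℝ 3 u x := hu.contDiffAt (hΩ.mem_nhds hx)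
  have hu2 : ContDiffAt ℝ 2 u x := hu3.of_le (by norm_num)
  have hgrad (i : Fin 2) : ContDiffAt ℝ 2 (pd u i) x := hu3.contDiffAt_pd (m := 2) i
  have hF : ContDiff ℝ 2 fun t => ∫ s in (0:ℝ)..t, f s := hf.integral_right (k := 1) 0
  have hFu : ContDiffAt ℝ 2 (fun y => ∫ s in (0:ℝ)..(u y), f s) x := hF.contDiffAt.comp x hu2
  have hlap : lap u =ᶠ[𝓝 x] fun y => -f (u y) := by
    filter_upwards [hΩ.mem_nhds hx] with y hy
    linarith [heq y hy]
  have hlap_grad (i : Fin 2) : lap (pd u i) x = -deriv f (u x) * pd u i x := by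
    have hneg : HasDerivAt (fun t => -f t) (-deriv f (u x)) (u x) :=
      (hf.differentiable one_ne_zero _).hasDerivAt.neg
    rw [← pd_lap_comm hu3, pd_congr_of_eventuallyEq hlap,
      pd_comp hneg (hu2.differentiableAt (by simp))]
  rw [lap_add (by fun_prop) (by fun_prop)]
  have hderiv : deriv (fun t => ∫ s in (0:ℝ)..t, f s) = f :=
    funext (Continuous.deriv_integral f hf.continuous 0)
  have hlap_x : lap u x = -f (u x) := hlap.eq_of_nhds
  rw [lap_sum fun i _ => (hgrad i).pow 2, lap_const_mul, lap_comp hF hu2, hderiv, hlap_x]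
  simp only [lap_sq (hgrad _), hlap_grad, Fin.sum_univ_two]
  ring
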